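/- Let G be a connected (2K_2, C_3)-free graph (a connected finite simple graph with no induced 2K_2 and no induced C_3), let S be a minimal vertex separator of G, and let G_1 be a non-trivial connected component of G − S. Then the induced subgraph on V(G_1) has no induced cycle on 5 vertices; moreover, the induced subgraph on V(G_1) ∪ S has no induced cycle on 5 vertices. -/

import Mathlib

variable {V : Type*}

/-- The graph `G − S`: delete the vertices of `S` (they become isolated). -/
def SimpleGraph.removeVerts (G : SimpleGraph V) (S : Set V) : SimpleGraph V where
  Adj u v := G.Adj u v ∧ u ∉ S ∧ v ∉ S
  symm := ⟨fun u v ⟨h, hu, hv⟩ => ⟨h.symm, hv, hu⟩⟩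
  loopless := ⟨fun u ⟨h, _, _⟩ => G.loopless.irrefl u h⟩

/-- `S` is a minimal vertex separator of `G`: some `a, b ∉ S` lie in different
connected components of `G − S`, while for every proper subset `S' ⊊ S` they lie
in the same connected component of `G − S'`. -/
def SimpleGraph.IsMinSep (G : SimpleGraph V) (S : Set V) : Prop :=
  ∃ a b : V, a ∉ S ∧ b ∉ S ∧ ¬ (G.removeVerts S).Reachable a b ∧
    ∀ S' : Set V, S' ⊂ S → (G.removeVerts S').Reachable a b

/-- `C` is (the vertex set of) a connected component of `G − S`. -/
def SimpleGraph.IsCompOf (G : SimpleGraph V) (S : Set V) (C : Set V) : Prop :=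
  ∃ u : V, u ∉ S ∧ C = {v : V | (G.removeVerts S).Reachable u v ∧ v ∉ S}

/-- `G` has no induced `2K₂`. -/
def SimpleGraph.TwoK2Free (G : SimpleGraph V) : Prop :=
  ¬ ∃ a b c d : V, a ≠ b ∧ a ≠ c ∧ a ≠ d ∧ b ≠ c ∧ b ≠ d ∧ c ≠ d ∧
    G.Adj a b ∧ G.Adj c d ∧ ¬ G.Adj a c ∧ ¬ G.Adj a d ∧ ¬ G.Adj b c ∧ ¬ G.Adj b d

/-- `G` has an induced cycle on `k` vertices, all of them lying in `A`. -/
def SimpleGraph.HasInducedCycleOn (G : SimpleGraph V) (A : Set V) (k : ℕ) [NeZero k] : Prop :=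
  ∃ f : Fin k → V, Function.Injective f ∧ (∀ i, f i ∈ A) ∧
    ∀ i j : Fin k, G.Adj (f i) (f j) ↔ (j = i + 1 ∨ i = j + 1)

/-- `G` has no induced cycle on `k` vertices. -/
def SimpleGraph.CkFree (G : SimpleGraph V) (k : ℕ) [NeZero k] : Prop :=
  ¬ G.HasInducedCycleOn Set.univ k

/-- `F` is a feedback vertex set of `G`: `G − F` contains no cycle. -/
def SimpleGraph.IsFVS (G : SimpleGraph V) (F : Set V) : Prop :=
  (G.removeVerts F).IsAcyclic

/-- The minimum cardinality of a feedback vertex set of `G`. -/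
noncomputable def SimpleGraph.minFVS (G : SimpleGraph V) : ℕ :=
  sInf {n : ℕ | ∃ F : Set V, G.IsFVS F ∧ F.ncard = n}

/-!
By minimality of `S`, some component `D ≠ C` of `G − S` is full (every vertex of `S` has a
neighbour in `D`). Against an edge of `C`, `2K₂`-freeness leaves no edge inside `D`, so `D = {d}`
with `N(d) = S`, and `d` sees nothing of `C`. On an induced `C₅` in `C ∪ S` the neighbours of `d`
form an independent set (no triangles): if it is empty, an edge `ds` and a cycle edge missed by `s`
form a `2K₂`; if it is one vertex `f i`, take `d f i` and the opposite cycle edge; if it is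
`{f 0, f 2}`, a neighbour `g ∈ C` of `f 1` yields a `2K₂` whichever of `f 3, f 4` it sees.
-/

theorem Fin.exists_not_and_not_succ (P : Fin 5 → Prop) (h : ∀ i, P i → ¬P (i + 1)) :
    ∃ j, ¬P j ∧ ¬P (j + 1) := by
  by_contra! hP
  by_cases h0 : P 0
  · exact h 4 (hP 3 (h 2 (hP 1 (h 0 h0)))) h0
  · exact h0 (hP 4 (h 3 (hP 2 (h 1 (hP 0 h0)))))

namespace SimpleGraph

variable {G : SimpleGraph V}

theorem TwoK2Free.elim (h : G.TwoK2Free) {a b c d : V} (hab : G.Adj a b) (hcd : G.Adj c d)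
    (hac : ¬G.Adj a c) (had : ¬G.Adj a d) (hbc : ¬G.Adj b c) (hbd : ¬G.Adj b d) : False := by
  refine h ⟨a, b, c, d, hab.ne, ?_, ?_, ?_, ?_, hcd.ne, hab, hcd, hac, had, hbc, hbd⟩ <;>
    rintro rfl
  exacts [hbc hab.symm, hbd hab.symm, hac hab, had hab]

theorem CkFree.elim_triangle (h : G.CkFree 3) {x y z : V}
    (hxy : G.Adj x y) (hyz : G.Adj y z) (hxz : G.Adj x z) : False := by
  refine h ⟨![x, y, z], ?_, fun _ => Set.mem_univ _, ?_⟩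
  · have := hxy.ne; have := hyz.ne; have := hxz.ne
    intro i j hij
    fin_cases i <;> fin_cases j <;> simp_all
  · have := hxy.symm; have := hyz.symm; have := hxz.symm
    intro i j
    fin_cases i <;> fin_cases j <;> simp_all

theorem HasInducedCycleOn.mono {A B : Set V} {k : ℕ} [NeZero k] (h : G.HasInducedCycleOn A k)
    (hAB : A ⊆ B) : G.HasInducedCycleOn B k :=
  let ⟨f, hinj, hA, hadj⟩ := h
  ⟨f, hinj, fun i => hAB (hA i), hadj⟩

def IsInducedCycle (G : SimpleGraph V) {k : ℕ} [NeZero k] (f : Fin k → V) : Prop :=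
  ∀ i j, G.Adj (f i) (f j) ↔ (j = i + 1 ∨ i = j + 1)

namespace IsInducedCycle

variable {k : ℕ} [NeZero k] {f : Fin k → V}

theorem adj (hf : G.IsInducedCycle f) {i j : Fin k} (h : j = i + 1 ∨ i = j + 1 := by decide) :
    G.Adj (f i) (f j) :=
  (hf i j).2 h

theorem not_adj (hf : G.IsInducedCycle f) {i j : Fin k}
    (h : ¬(j = i + 1 ∨ i = j + 1) := by decide) : ¬G.Adj (f i) (f j) :=
  mt (hf i j).1 h

theorem rotate (hf : G.IsInducedCycle f) (r : Fin k) : G.IsInducedCycle (fun i => f (r + i)) := by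
  intro i j
  exact (hf _ _).trans (by simp only [add_assoc, add_right_inj])

end IsInducedCycle

section Pentagon

variable {f : Fin 5 → V} {d : V}

theorem IsInducedCycle.exists_not_adj_not_adj (hc3 : G.CkFree 3) (hf : G.IsInducedCycle f)
    (s : V) : ∃ j, ¬G.Adj s (f j) ∧ ¬G.Adj s (f (j + 1)) :=
  Fin.exists_not_and_not_succ _ fun _ hi hi1 => hc3.elim_triangle hi (hf.adj (.inl rfl)) hi1

theorem IsInducedCycle.elim_adj_zero_adj_two (h2k2 : G.TwoK2Free) (hc3 : G.CkFree 3)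
    (hf : G.IsInducedCycle f) (hd0 : G.Adj d (f 0)) (hd2 : G.Adj d (f 2)) {g : V}
    (hg : G.Adj (f 1) g) (hdg : ¬G.Adj d g) : False := by
  have hd3 : ¬G.Adj d (f 3) := fun h => hc3.elim_triangle hd2 hf.adj h
  have hd4 : ¬G.Adj d (f 4) := fun h => hc3.elim_triangle h hf.adj hd0
  have hg0 : ¬G.Adj g (f 0) := fun h => hc3.elim_triangle hg h hf.adj
  have hg2 : ¬G.Adj g (f 2) := fun h => hc3.elim_triangle hg h hf.adj
  by_cases hg3 : G.Adj g (f 3)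
  · exact h2k2.elim hg3 hd0.symm hg0 (fun h => hdg h.symm) hf.not_adj (fun h => hd3 h.symm)
  by_cases hg4 : G.Adj g (f 4)
  · exact h2k2.elim hg4 hd2.symm hg2 (fun h => hdg h.symm) hf.not_adj (fun h => hd4 h.symm)
  exact h2k2.elim hg (hf.adj : G.Adj (f 3) (f 4)) hf.not_adj hf.not_adj hg3 hg4

theorem IsInducedCycle.elim_adj_zero (h2k2 : G.TwoK2Free) (hf : G.IsInducedCycle f)
    (hd0 : G.Adj d (f 0)) (hd2 : ¬G.Adj d (f 2)) (hd3 : ¬G.Adj d (f 3)) : False :=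
  h2k2.elim hd0 hf.adj hd2 hd3 hf.not_adj hf.not_adj

theorem IsInducedCycle.elim_of_adj (h2k2 : G.TwoK2Free) (hc3 : G.CkFree 3)
    (hf : G.IsInducedCycle f) {s : V} (hds : G.Adj d s)
    (hext : ∀ i, ¬G.Adj d (f i) → ∃ g, G.Adj (f i) g ∧ ¬G.Adj d g) : False := by
  by_cases hpair : ∃ j, G.Adj d (f j) ∧ G.Adj d (f (j + 2))
  · obtain ⟨j, hj, hj2⟩ := hpair
    obtain ⟨g, hg, hdg⟩ := hext (j + 1) fun h => hc3.elim_triangle hj (hf.adj (.inl rfl)) h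
    exact (hf.rotate j).elim_adj_zero_adj_two h2k2 hc3 (by simpa using hj) hj2 hg hdg
  push Not at hpair
  by_cases hsome : ∃ i, G.Adj d (f i)
  · obtain ⟨i, hi⟩ := hsome
    have hi3 : ¬G.Adj d (f (i + 3)) := fun h =>
      hpair _ h (by rwa [add_assoc, show (3 + 2 : Fin 5) = 0 from rfl, add_zero])
    exact (hf.rotate i).elim_adj_zero h2k2 (by simpa using hi) (hpair i hi) hi3
  push Not at hsome
  obtain ⟨j, hj, hj1⟩ := hf.exists_not_adj_not_adj hc3 s
  exact h2k2.elim hds (hf.adj (.inl rfl)) (hsome j) (hsome (j + 1)) hj hj1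

end Pentagon

theorem removeVerts_empty : G.removeVerts ∅ = G := by
  ext
  simp [removeVerts]

theorem Reachable.eq_of_forall_adj_mem {S : Set V} {d x : V}
    (h : (G.removeVerts S).Reachable d x) (hd : ∀ y, G.Adj d y → y ∈ S) : x = d := by
  obtain ⟨p⟩ := h
  cases p with
  | nil => rfl
  | cons h _ => exact absurd (hd _ h.1) h.2.2

namespace IsCompOf

variable {S C : Set V} {x y : V}

theorem notMem_sep (hC : G.IsCompOf S C) (hx : x ∈ C) : x ∉ S := by
  obtain ⟨u, -, rfl⟩ := hC
  exact hx.2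

theorem nonempty (hC : G.IsCompOf S C) : C.Nonempty := by
  obtain ⟨u, hu, rfl⟩ := hC
  exact ⟨u, .rfl, hu⟩

theorem reachable (hC : G.IsCompOf S C) (hx : x ∈ C) (hy : y ∈ C) :
    (G.removeVerts S).Reachable x y := by
  obtain ⟨u, -, rfl⟩ := hC
  exact hx.1.symm.trans hy.1

theorem mem_of_adj (hC : G.IsCompOf S C) (hx : x ∈ C) (hy : y ∉ S) (hxy : G.Adj x y) : y ∈ C := by
  obtain ⟨u, -, rfl⟩ := hC
  exact ⟨hx.1.trans (Adj.reachable ⟨hxy, hx.2, hy⟩), hy⟩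

theorem exists_adj (hC : G.IsCompOf S C) (hnt : ¬∃ v, C = {v}) (hx : x ∈ C) :
    ∃ y ∈ C, G.Adj x y := by
  obtain ⟨w, hw, hwx⟩ : ∃ w ∈ C, w ≠ x := by
    by_contra! h
    exact hnt ⟨x, Set.eq_singleton_iff_unique_mem.2 ⟨hx, h⟩⟩
  obtain ⟨p⟩ := hC.reachable hx hw
  cases p with
  | nil => exact absurd rfl hwx
  | cons h _ => exact ⟨_, hC.mem_of_adj hx h.2.2 h.1, h.1⟩

end IsCompOf

theorem TwoK2Free.mem_sep_of_adj {S C : Set V} {d y : V} (h2k2 : G.TwoK2Free)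
    (hC : G.IsCompOf S C) (hnt : ¬∃ v, C = {v}) (hdS : d ∉ S) (hdC : d ∉ C) (hdy : G.Adj d y) :
    y ∈ S := by
  by_contra hyS
  have hfar : ∀ z ∉ S, z ∉ C → ∀ c ∈ C, ¬G.Adj z c := fun z hz hzC c hc h =>
    hzC (hC.mem_of_adj hc hz h.symm)
  have hyC : y ∉ C := fun hy => hdC (hC.mem_of_adj hy hdS hdy.symm)
  obtain ⟨x, hx⟩ := hC.nonempty
  obtain ⟨x', hx', hxx'⟩ := hC.exists_adj hnt hx
  exact h2k2.elim hdy hxx' (hfar d hdS hdC x hx) (hfar d hdS hdC x' hx') (hfar y hyS hyC x hx)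
    (hfar y hyS hyC x' hx')

theorem exists_adj_of_reachable_removeVerts_diff {S : Set V} {a b s : V} (ha : a ∉ S)
    (hab : ¬(G.removeVerts S).Reachable a b)
    (hab' : (G.removeVerts (S \ {s})).Reachable a b) :
    ∃ x ∉ S, (G.removeVerts S).Reachable a x ∧ G.Adj x s := by
  -- A walk avoiding `S \ {s}` can leave the component of `a` in `G − S` only through `s`.
  obtain ⟨p⟩ := hab'
  suffices ∀ {v w : V} (p : (G.removeVerts (S \ {s})).Walk v w), v ∉ S →
      (G.removeVerts S).Reachable a v → ¬(G.removeVerts S).Reachable a w →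
      ∃ x ∉ S, (G.removeVerts S).Reachable a x ∧ G.Adj x s from this p ha .rfl hab
  intro v w p
  induction p with
  | nil => exact fun _ hav haw => (haw hav).elim
  | @cons v c _ h _ ih =>
    intro hv hav haw
    by_cases hcs : c = s
    · exact ⟨v, hv, hav, hcs ▸ h.1⟩
    · have hcS : c ∉ S := fun hcS => h.2.2 ⟨hcS, hcs⟩
      exact ih hcS (hav.trans (Adj.reachable ⟨h.1, hv, hcS⟩)) haw

namespace IsMinSep

variable {S : Set V}

theorem nonempty (hS : G.IsMinSep S) (hconn : G.Connected) : S.Nonempty := by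
  obtain ⟨a, b, -, -, hab, -⟩ := hS
  rw [Set.nonempty_iff_ne_empty]
  rintro rfl
  rw [removeVerts_empty] at hab
  exact hab (hconn.preconnected a b)

/-- Some component of `G − S` outside `C` is full: every vertex of `S` has a neighbour in it. -/
theorem exists_full_component_outside {C : Set V} (hS : G.IsMinSep S) (hC : G.IsCompOf S C) :
    ∃ d ∉ S, d ∉ C ∧ ∀ s ∈ S, ∃ x ∉ S, (G.removeVerts S).Reachable d x ∧ G.Adj x s := by
  obtain ⟨a, b, ha, hb, hab, hmin⟩ := hS
  have hdiff : ∀ s ∈ S, S \ {s} ⊂ S := fun s hs => Set.sdiff_singleton_ssubset.2 hs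
  by_cases haC : a ∈ C
  · refine ⟨b, hb, fun hbC => hab (hC.reachable haC hbC), fun s hs => ?_⟩
    exact exists_adj_of_reachable_removeVerts_diff hb (mt .symm hab) (hmin _ (hdiff s hs)).symm
  · exact ⟨a, ha, haC, fun s hs =>
      exists_adj_of_reachable_removeVerts_diff ha hab (hmin _ (hdiff s hs))⟩

end IsMinSep

end SimpleGraph

theorem stmt16_general (G : SimpleGraph V) (S C : Set V)
    (hconn : G.Connected) (h2k2 : G.TwoK2Free) (hc3 : G.CkFree 3)
    (hS : G.IsMinSep S) (hC : G.IsCompOf S C) (hnt : ¬ ∃ v, C = {v}) :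
    ¬ G.HasInducedCycleOn C 5 ∧ ¬ G.HasInducedCycleOn (C ∪ S) 5 := by
  obtain ⟨d, hdS, hdC, hfull⟩ := hS.exists_full_component_outside hC
  have hNd : ∀ y, G.Adj d y → y ∈ S := fun _ => h2k2.mem_sep_of_adj hC hnt hdS hdC
  have hSd : ∀ s ∈ S, G.Adj d s := fun s hs => by
    obtain ⟨x, -, hdx, hxs⟩ := hfull s hs
    rwa [hdx.eq_of_forall_adj_mem hNd] at hxs
  obtain ⟨s, hs⟩ := hS.nonempty hconn
  have hCS : ¬G.HasInducedCycleOn (C ∪ S) 5 := by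
    rintro ⟨f, -, hf, hcyc⟩
    refine SimpleGraph.IsInducedCycle.elim_of_adj h2k2 hc3 hcyc (hSd s hs) fun i hdi => ?_
    have hi : f i ∈ C := (hf i).resolve_right fun h => hdi (hSd _ h)
    obtain ⟨g, hg, hig⟩ := hC.exists_adj hnt hi
    exact ⟨g, hig, fun h => hC.notMem_sep hg (hNd g h)⟩
  exact ⟨fun h => hCS (h.mono Set.subset_union_left), hCS⟩

theorem stmt16 [Fintype V] (G : SimpleGraph V) (S C : Set V)
    (hconn : G.Connected) (h2k2 : G.TwoK2Free) (hc3 : G.CkFree 3)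
    (hS : G.IsMinSep S) (hC : G.IsCompOf S C) (hnt : ¬ ∃ v, C = {v}) :
    ¬ G.HasInducedCycleOn C 5 ∧ ¬ G.HasInducedCycleOn (C ∪ S) 5 :=
  stmt16_general G S C hconn h2k2 hc3 hS hC hnt
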